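/- arXiv:1212.3346 — 3 statements merged into one kernel-verified Lean document; each statement's English description precedes it below -/
import Mathlib

section
/- Let k ≥ 1, let c be a positive real number, and let r be the least positive real root of the polynomial 1 - x^(k-1) - c·x^k. Then every complex root z of this polynomial with |z| = r satisfies z = r; that is, r is the unique root of minimal modulus on its circle. -/
/-!
Write the root equation as `z ^ (k-1) + c z ^ k = 1`. When `‖z‖ = r`, the two summands have norms
`r ^ (k-1)` and `c r ^ k`, which add up to `1` because `r` is a root: equality holds in the triangle
inequality, so both summands are nonnegative reals. Hence `z ^ (k-1) = r ^ (k-1)` and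
`z ^ k = r ^ k`, and dividing gives `z = r`.
-/

open Complex
open scoped ComplexOrder

theorem Complex.nonneg_of_add_eq_norm_add_norm {a b : ℂ} (hab : a + b = (‖a‖ + ‖b‖ : ℝ)) :
    0 ≤ a := by
  have hre : a.re + b.re = ‖a‖ + ‖b‖ := by simpa using congrArg re hab
  have ha := re_le_norm a
  have hb := re_le_norm b
  exact re_eq_norm.mp (by linarith)

theorem eq_of_pow_eq_of_pow_succ_eq {G : Type*} [MonoidWithZero G] [IsLeftCancelMulZero G]
    {z w : G} {n : ℕ} (hn : z ^ n = w ^ n) (hw : w ^ n ≠ 0)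
    (hsucc : z ^ (n + 1) = w ^ (n + 1)) : z = w := by
  rw [pow_succ, pow_succ, hn] at hsucc
  exact mul_left_cancel₀ hw hsucc

theorem unique_root_on_circle_general (k : ℕ) (hk : 1 ≤ k) (c r : ℝ) (hc : 0 < c) (hr : 0 < r)
    (hroot : 1 - r ^ (k - 1) - c * r ^ k = 0) :
    ∀ z : ℂ, 1 - z ^ (k - 1) - (c : ℂ) * z ^ k = 0 → ‖z‖ = r → z = (r : ℂ) := by
  intro z hz hzr
  obtain ⟨n, rfl⟩ := Nat.exists_eq_add_of_le' hk
  simp only [Nat.add_sub_cancel] at hz hroot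
  have hroot' : (1 : ℂ) - (r : ℂ) ^ n - c * (r : ℂ) ^ (n + 1) = 0 := by exact_mod_cast hroot
  have hpow : z ^ n = (r : ℂ) ^ n := by
    have hnorm : ‖z ^ n‖ + ‖(c : ℂ) * z ^ (n + 1)‖ = 1 := by
      simp only [norm_mul, norm_pow, norm_real, Real.norm_of_nonneg hc.le, hzr]
      linarith
    have hnonneg : 0 ≤ z ^ n :=
      nonneg_of_add_eq_norm_add_norm (b := c * z ^ (n + 1))
        (by rw [hnorm, ofReal_one]; linear_combination -hz)
    rw [eq_coe_norm_of_nonneg hnonneg, norm_pow, hzr, ofReal_pow]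
  have hpow_succ : z ^ (n + 1) = (r : ℂ) ^ (n + 1) := by
    apply mul_left_cancel₀ (ofReal_ne_zero.mpr hc.ne')
    linear_combination hroot' - hz - hpow
  exact eq_of_pow_eq_of_pow_succ_eq hpow (pow_ne_zero n (ofReal_ne_zero.mpr hr.ne')) hpow_succ

/-- If r is the least positive real root of 1 - x^(k-1) - c x^k (c > 0), then every
complex root of modulus r equals r. -/
theorem unique_root_on_circle (k : ℕ) (hk : 1 ≤ k) (c r : ℝ) (hc : 0 < c) (hr : 0 < r)
    (hroot : 1 - r ^ (k - 1) - c * r ^ k = 0)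
    (hleast : ∀ s : ℝ, 0 < s → 1 - s ^ (k - 1) - c * s ^ k = 0 → r ≤ s) :
    ∀ z : ℂ, 1 - z ^ (k - 1) - (c : ℂ) * z ^ k = 0 → ‖z‖ = r → z = (r : ℂ) :=
  unique_root_on_circle_general k hk c r hc hr hroot
end

section
/- Let U be the set of permutations obtained by inflating, for each m ≥ 4, the two 'end' entries of the increasing oscillation σ_m by the pattern 12 (the least and greatest entries when m is even; the least and rightmost entries when m is odd). Then U is an infinite antichain under the pattern containment order. -/
/-- A permutation of arbitrary finite length. -/
abbrev PermS : Type := Σ n : ℕ, Equiv.Perm (Fin n)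

/-- Pattern containment: `σ` is contained in `π`. -/
def PContains {k n : ℕ} (σ : Equiv.Perm (Fin k)) (π : Equiv.Perm (Fin n)) : Prop :=
  ∃ f : Fin k ↪o Fin n, ∀ a b : Fin k, σ a < σ b ↔ π (f a) < π (f b)

/-- Pattern containment on permutations of arbitrary length. -/
def ContainsS (q p : PermS) : Prop := PContains q.2 p.2

/-- A permutation class: downward closed under pattern containment. -/
def IsPermClass (C : Set PermS) : Prop := ∀ p ∈ C, ∀ q : PermS, ContainsS q p → q ∈ C

/-- Downward closure of a set of permutations. -/
def dclosure (X : Set PermS) : Set PermS := {q | ∃ p ∈ X, ContainsS q p}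

/-- The inversion graph of a permutation. -/
def invGraph {n : ℕ} (π : Equiv.Perm (Fin n)) : SimpleGraph (Fin n) :=
  SimpleGraph.fromRel (fun i j => i < j ∧ π j < π i)

/-- Direct sum of permutations. -/
def dsumS (q p : PermS) : PermS :=
  ⟨q.1 + p.1, (Equiv.permCongr finSumFinEquiv) (Equiv.sumCongr q.2 p.2)⟩

/-- Sum indecomposable. -/
def SumIndecS (p : PermS) : Prop :=
  0 < p.1 ∧ ∀ q r : PermS, 0 < q.1 → 0 < r.1 → p ≠ dsumS q r

/-- The value (1-indexed) at (1-indexed) position `p` of the increasing oscillation of length `m`. -/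
def oscVal (m p : ℕ) : ℕ :=
  if p % 2 = 0 then max 1 (p - 2)
  else if p + 2 ≤ m then p + 2
  else if m % 2 = 0 then m else max 1 (m - 1)

/-- `σ` is the increasing oscillation of length `m`. -/
def IsOsc (m : ℕ) (σ : Equiv.Perm (Fin m)) : Prop :=
  ∀ i : Fin m, (σ i : ℕ) + 1 = oscVal m ((i : ℕ) + 1)

/-- `p` is the inflation of `σ` by the permutations `α i`. -/
def IsInflation {m : ℕ} (σ : Equiv.Perm (Fin m)) (α : Fin m → PermS) (p : PermS) : Prop :=
  ∃ e : (Σ i : Fin m, Fin (α i).1) ≃ Fin p.1,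
    (∀ (i i' : Fin m) (j : Fin (α i).1) (j' : Fin (α i').1), i < i' → e ⟨i, j⟩ < e ⟨i', j'⟩) ∧
    (∀ (i : Fin m) (j j' : Fin (α i).1), j < j' → e ⟨i, j⟩ < e ⟨i, j'⟩) ∧
    (∀ (i i' : Fin m) (j : Fin (α i).1) (j' : Fin (α i').1), σ i < σ i' →
      p.2 (e ⟨i, j⟩) < p.2 (e ⟨i', j'⟩)) ∧
    (∀ (i : Fin m) (j j' : Fin (α i).1), (α i).2 j < (α i).2 j' →
      p.2 (e ⟨i, j⟩) < p.2 (e ⟨i, j'⟩))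

/-- Upper growth rate of a set of permutations. -/
noncomputable def ugr (X : Set PermS) : ENNReal :=
  Filter.limsup
    (fun n : ℕ => (Nat.card {p : PermS // p ∈ X ∧ p.1 = n} : ENNReal) ^ ((1 : ℝ) / n))
    Filter.atTop

/-- Inflate the two "end" entries of an oscillation by `12` and every other entry by `1`. -/
def endArgs {m : ℕ} (σ : Equiv.Perm (Fin m)) : Fin m → PermS :=
  fun i =>
    if (σ i : ℕ) = 0 ∨ (m % 2 = 0 ∧ (σ i : ℕ) = m - 1) ∨ (m % 2 = 1 ∧ (i : ℕ) = m - 1)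
    then ⟨2, 1⟩ else ⟨1, 1⟩

namespace UPf

/-! ### ℕ-level arithmetic layer -/

def sval (m i : ℕ) : ℕ :=
  if i % 2 = 1 then i - 2 else if i + 3 ≤ m then i + 2 else m - 1 - m % 2
def P2 (m : ℕ) : ℕ := if m % 2 = 0 then m - 2 else m - 1
def V2 (m : ℕ) : ℕ := if m % 2 = 0 then m - 1 else m - 2
def cP (m i : ℕ) : ℕ := (if 1 < i then 1 else 0) + (if P2 m < i then 1 else 0)
def pos (m i j : ℕ) : ℕ := i + j + cP m i
def cV (m w : ℕ) : ℕ := (if 0 < w then 1 else 0) + (if V2 m < w then 1 else 0)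
def vv (m w j : ℕ) : ℕ := w + j + cV m w
def rho (m i : ℕ) : ℕ :=
  if m % 2 = 1 ∧ i = m - 1 then m - 1 else if i % 2 = 0 then i + 1 else i - 1
def blkOf (ℓ : ℕ) : ℕ := if ℓ % 2 = 0 then ℓ + 1 else ℓ - 1
def DiffOne (a b : ℕ) : Prop := a = b + 1 ∨ b = a + 1

lemma sval_osc {m i : ℕ} (hm : 4 ≤ m) (hi : i < m) : sval m i + 1 = oscVal m (i + 1) := by
  unfold sval oscVal; split_ifs <;> omega

lemma sval_lt {m i : ℕ} (hm : 4 ≤ m) (hi : i < m) : sval m i < m := by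
  unfold sval; split_ifs <;> omega

lemma sval_inj {m i i' : ℕ} (hm : 4 ≤ m) (hi : i < m) (hi' : i' < m)
    (h : sval m i = sval m i') : i = i' := by
  unfold sval at h; split_ifs at h <;> omega

lemma sp_corr {m i : ℕ} (hm : 4 ≤ m) (hi : i < m) :
    (i = 1 ∨ i = P2 m) ↔ (sval m i = 0 ∨ sval m i = V2 m) := by
  unfold sval P2 V2; split_ifs <;>
    (try simp only [false_or, or_false, true_or, or_true, false_and, and_false, true_and, and_true, iff_true, true_iff, iff_false, false_iff]) <;> omega

lemma cond_corr {m i : ℕ} (hm : 4 ≤ m) (hi : i < m) :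
    (sval m i = 0 ∨ (m % 2 = 0 ∧ sval m i = m - 1) ∨ (m % 2 = 1 ∧ i = m - 1))
      ↔ (i = 1 ∨ i = P2 m) := by
  unfold sval P2; split_ifs <;>
    (try simp only [false_or, or_false, true_or, or_true, false_and, and_false, true_and, and_true, iff_true, true_iff, iff_false, false_iff]) <;> omega

lemma pos_lt {m i j : ℕ} (hm : 4 ≤ m) (hi : i < m)
    (hj : j ≤ if i = 1 ∨ i = P2 m then 1 else 0) : pos m i j < m + 2 := by
  unfold pos cP P2 at *; split_ifs at * <;> omega

lemma pos_lt_iff {m i j i' j' : ℕ} (hm : 4 ≤ m) (hi : i < m) (hi' : i' < m)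
    (hj : j ≤ if i = 1 ∨ i = P2 m then 1 else 0)
    (hj' : j' ≤ if i' = 1 ∨ i' = P2 m then 1 else 0) :
    pos m i j < pos m i' j' ↔ (i < i' ∨ (i = i' ∧ j < j')) := by
  unfold pos cP P2 at *; split_ifs at * <;> omega

lemma pos_inj {m i j i' j' : ℕ} (hm : 4 ≤ m) (hi : i < m) (hi' : i' < m)
    (hj : j ≤ if i = 1 ∨ i = P2 m then 1 else 0)
    (hj' : j' ≤ if i' = 1 ∨ i' = P2 m then 1 else 0)
    (h : pos m i j = pos m i' j') : i = i' ∧ j = j' := by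
  unfold pos cP P2 at *; split_ifs at * <;> omega

lemma vv_lt {m w j : ℕ} (hm : 4 ≤ m) (hw : w < m)
    (hj : j ≤ if w = 0 ∨ w = V2 m then 1 else 0) : vv m w j < m + 2 := by
  unfold vv cV V2 at *; split_ifs at * <;> omega

lemma vv_lt_iff {m w j w' j' : ℕ} (hm : 4 ≤ m) (hw : w < m) (hw' : w' < m)
    (hj : j ≤ if w = 0 ∨ w = V2 m then 1 else 0)
    (hj' : j' ≤ if w' = 0 ∨ w' = V2 m then 1 else 0) :
    vv m w j < vv m w' j' ↔ (w < w' ∨ (w = w' ∧ j < j')) := by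
  unfold vv cV V2 at *; split_ifs at * <;> omega

lemma vv_inj {m w j w' j' : ℕ} (hm : 4 ≤ m) (hw : w < m) (hw' : w' < m)
    (hj : j ≤ if w = 0 ∨ w = V2 m then 1 else 0)
    (hj' : j' ≤ if w' = 0 ∨ w' = V2 m then 1 else 0)
    (h : vv m w j = vv m w' j') : w = w' ∧ j = j' := by
  unfold vv cV V2 at *; split_ifs at * <;> omega

lemma rho_le {m i : ℕ} (hm : 4 ≤ m) (hi : i < m) : rho m i ≤ m - 1 := by
  unfold rho; split_ifs <;> omega

lemma rho_inj {m i i' : ℕ} (hm : 4 ≤ m) (hi : i < m) (hi' : i' < m)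
    (h : rho m i = rho m i') : i = i' := by
  unfold rho at h; split_ifs at h <;> omega

lemma rho_special {m i : ℕ} (hm : 4 ≤ m) (hi : i < m) :
    (i = 1 ∨ i = P2 m) ↔ (rho m i = 0 ∨ rho m i = m - 1) := by
  unfold rho P2; split_ifs <;>
    (try simp only [false_or, or_false, true_or, or_true, false_and, and_false, true_and, and_true, iff_true, true_iff, iff_false, false_iff]) <;> omega

lemma rho_zero {m : ℕ} (hm : 4 ≤ m) : rho m 0 = 1 := by unfold rho; split_ifs <;> omega
lemma rho_one {m : ℕ} (hm : 4 ≤ m) : rho m 1 = 0 := by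
  unfold rho; split_ifs <;> first | omega | simp_all
lemma rho_P2 {m : ℕ} (hm : 4 ≤ m) : rho m (P2 m) = m - 1 := by
  unfold rho P2; split_ifs <;> omega

lemma blkOf_lt {m ℓ : ℕ} (hm : 4 ≤ m) (h1 : 1 ≤ ℓ) (h2 : ℓ ≤ m - 2) : blkOf ℓ < m := by
  unfold blkOf; split_ifs <;> omega

lemma rho_blkOf {m ℓ : ℕ} (hm : 4 ≤ m) (h1 : 1 ≤ ℓ) (h2 : ℓ ≤ m - 2) :
    rho m (blkOf ℓ) = ℓ := by
  unfold rho blkOf; split_ifs <;> omega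

lemma C3 {m i i' : ℕ} (hm : 4 ≤ m) (hi : i < m) (hi' : i' < m) :
    ((i < i' ∧ sval m i' < sval m i) ∨ (i' < i ∧ sval m i < sval m i'))
      ↔ DiffOne (rho m i) (rho m i') := by
  unfold sval rho DiffOne; split_ifs <;>
    (try simp only [false_or, or_false, true_or, or_true, false_and, and_false, true_and, and_true, iff_true, true_iff, iff_false, false_iff]) <;> omega

lemma pdecomp {m x : ℕ} (hm : 4 ≤ m) (hx : x < m + 2) :
    ∃ i j, i < m ∧ (j ≤ if i = 1 ∨ i = P2 m then 1 else 0) ∧ x = pos m i j := by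
  by_cases h0 : x = 0
  · exact ⟨0, 0, by omega, by unfold P2; split_ifs <;> omega, by unfold pos cP P2; split_ifs <;> omega⟩
  by_cases h1 : x ≤ 2
  · refine ⟨1, x - 1, by omega, by split_ifs <;> omega, ?_⟩
    unfold pos cP P2 at *; split_ifs at * <;> omega
  by_cases h2 : x ≤ P2 m + 1
  · refine ⟨x - 1, 0, by unfold P2 at *; split_ifs at * <;> omega, by split_ifs <;> omega, ?_⟩
    unfold pos cP P2 at *; split_ifs at * <;> omega
  by_cases h3 : x ≤ P2 m + 2
  · refine ⟨P2 m, x - (P2 m + 1), by unfold P2 at *; split_ifs at * <;> omega,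
      by split_ifs <;> omega, ?_⟩
    unfold pos cP P2 at *; split_ifs at * <;> omega
  · refine ⟨x - 2, 0, by unfold P2 at *; split_ifs at * <;> omega, ?_, ?_⟩
    · have hns : ¬ (x - 2 = 1 ∨ x - 2 = P2 m) := by unfold P2 at *; split_ifs at * <;> omega
      rw [if_neg hns]
    · unfold pos cP P2 at *; split_ifs at * <;> omega

lemma vdecomp {m x : ℕ} (hm : 4 ≤ m) (hx : x < m + 2) :
    ∃ w u, w < m ∧ (u ≤ if w = 0 ∨ w = V2 m then 1 else 0) ∧ x = vv m w u := by
  by_cases h0 : x ≤ 1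
  · exact ⟨0, x, by omega, by split_ifs <;> omega, by unfold vv cV V2; split_ifs <;> omega⟩
  by_cases h1 : x ≤ V2 m
  · refine ⟨x - 1, 0, by unfold V2 at *; split_ifs at * <;> omega, by split_ifs <;> omega, ?_⟩
    unfold vv cV V2 at *; split_ifs at * <;> omega
  by_cases h2 : x ≤ V2 m + 2
  · refine ⟨V2 m, x - (V2 m + 1), by unfold V2 at *; split_ifs at * <;> omega,
      by split_ifs with h <;> [(unfold V2 at *; split_ifs at * <;> omega); omega], ?_⟩
    unfold vv cV V2 at *; split_ifs at * <;> omega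
  · refine ⟨x - 2, 0, by unfold V2 at *; split_ifs at * <;> omega, by split_ifs <;> omega, ?_⟩
    unfold vv cV V2 at *; split_ifs at * <;> omega

end UPf
namespace UPf

/-! ### The oscillation permutation and its inflation -/

section
variable (m : ℕ) (hm : 4 ≤ m)

noncomputable def oscPerm : Equiv.Perm (Fin m) :=
  Equiv.ofBijective (fun i => (⟨sval m i % m, Nat.mod_lt _ i.pos⟩ : Fin m))
    (Finite.injective_iff_bijective.mp (by
      intro a b h
      apply Fin.ext
      have ha := sval_lt hm a.isLt
      have hb := sval_lt hm b.isLt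
      have hv : sval m (a : ℕ) % m = sval m (b : ℕ) % m := congrArg Fin.val h
      rw [Nat.mod_eq_of_lt ha, Nat.mod_eq_of_lt hb] at hv
      exact sval_inj hm a.isLt b.isLt hv))

lemma oscPerm_apply (i : Fin m) : ((oscPerm m hm) i : ℕ) = sval m (i : ℕ) := by
  show ((⟨sval m i % m, _⟩ : Fin m) : ℕ) = _
  exact Nat.mod_eq_of_lt (sval_lt hm i.isLt)

lemma isOsc_oscPerm : IsOsc m (oscPerm m hm) := by
  intro i
  rw [oscPerm_apply m hm i]
  exact sval_osc hm i.isLt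

lemma args_fst (i : Fin m) :
    (endArgs (oscPerm m hm) i).1 = if (i : ℕ) = 1 ∨ (i : ℕ) = P2 m then 2 else 1 := by
  have hc : (((oscPerm m hm) i : ℕ) = 0 ∨ (m % 2 = 0 ∧ ((oscPerm m hm) i : ℕ) = m - 1)
      ∨ (m % 2 = 1 ∧ (i : ℕ) = m - 1)) ↔ ((i : ℕ) = 1 ∨ (i : ℕ) = P2 m) := by
    rw [oscPerm_apply m hm i]; exact cond_corr hm i.isLt
  unfold endArgs
  by_cases h : (i : ℕ) = 1 ∨ (i : ℕ) = P2 m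
  · rw [if_pos (hc.mpr h), if_pos h]
  · rw [if_neg (fun c => h (hc.mp c)), if_neg h]

lemma args_snd (i : Fin m) (j : Fin (endArgs (oscPerm m hm) i).1) :
    ((endArgs (oscPerm m hm) i).2 j : ℕ) = (j : ℕ) := by
  have h : ∀ (q : Σ n : ℕ, Equiv.Perm (Fin n)), q = ⟨2, 1⟩ ∨ q = ⟨1, 1⟩ →
      ∀ u : Fin q.1, ((q.2 u : ℕ)) = (u : ℕ) := by
    rintro q (rfl | rfl) u <;> simp [Equiv.Perm.one_apply]
  refine h _ ?_ j
  unfold endArgs; split_ifs <;> simp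

lemma args_lt_iff (i : Fin m) (j j' : Fin (endArgs (oscPerm m hm) i).1) :
    (endArgs (oscPerm m hm) i).2 j < (endArgs (oscPerm m hm) i).2 j' ↔ (j : ℕ) < (j' : ℕ) := by
  rw [Fin.lt_def, args_snd m hm i j, args_snd m hm i j']

abbrev ST := (i : Fin m) × Fin ((endArgs (oscPerm m hm)) i).1

lemma j_bound {i : Fin m} (j : Fin (endArgs (oscPerm m hm) i).1) :
    (j : ℕ) ≤ if (i : ℕ) = 1 ∨ (i : ℕ) = P2 m then 1 else 0 := by
  have h2 : (j : ℕ) < if (i : ℕ) = 1 ∨ (i : ℕ) = P2 m then 2 else 1 :=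
    lt_of_lt_of_eq j.isLt (args_fst m hm i)
  split_ifs at h2 ⊢ <;> omega

noncomputable def eP : ST m hm ≃ Fin (m + 2) :=
  Equiv.ofBijective (fun x => (⟨pos m x.1 x.2 % (m + 2), Nat.mod_lt _ (by omega)⟩ : Fin (m+2)))
    (by
      constructor
      · intro a b h
        have ha := pos_lt hm a.1.isLt (j_bound m hm a.2)
        have hb := pos_lt hm b.1.isLt (j_bound m hm b.2)
        have hv : pos m a.1 a.2 = pos m b.1 b.2 := by
          have := congrArg Fin.val h
          simpa [Nat.mod_eq_of_lt ha, Nat.mod_eq_of_lt hb] using this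
        have hij := pos_inj hm a.1.isLt b.1.isLt (j_bound m hm a.2) (j_bound m hm b.2) hv
        obtain ⟨a1, a2⟩ := a; obtain ⟨b1, b2⟩ := b
        obtain ⟨hi, hj⟩ := hij
        have : a1 = b1 := Fin.ext hi
        subst this
        have : a2 = b2 := Fin.ext hj
        subst this
        rfl
      · intro y
        obtain ⟨i, j, hi, hj, hy⟩ := pdecomp hm y.isLt
        refine ⟨⟨⟨i, hi⟩, ⟨j, ?_⟩⟩, ?_⟩
        · rw [args_fst m hm ⟨i, hi⟩]
          simp only
          split_ifs at hj ⊢ <;> omega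
        · apply Fin.ext
          show pos m i j % (m + 2) = (y : ℕ)
          rw [Nat.mod_eq_of_lt (pos_lt hm hi hj)]
          exact hy.symm)

end
end UPf
namespace UPf
section
variable (m : ℕ) (hm : 4 ≤ m)

def vSize (w : Fin m) : ℕ := if (w : ℕ) = 0 ∨ (w : ℕ) = V2 m then 2 else 1

abbrev VT := (w : Fin m) × Fin (vSize m w)

lemma u_bound {w : Fin m} (u : Fin (vSize m w)) :
    (u : ℕ) ≤ if (w : ℕ) = 0 ∨ (w : ℕ) = V2 m then 1 else 0 := by
  have := u.isLt
  unfold vSize at this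
  split_ifs at this ⊢ <;> omega

noncomputable def eV : VT m ≃ Fin (m + 2) :=
  Equiv.ofBijective (fun x => (⟨vv m x.1 x.2 % (m + 2), Nat.mod_lt _ (by omega)⟩ : Fin (m+2)))
    (by
      constructor
      · intro a b h
        have ha := vv_lt hm a.1.isLt (u_bound m a.2)
        have hb := vv_lt hm b.1.isLt (u_bound m b.2)
        have hv : vv m a.1 a.2 = vv m b.1 b.2 := by
          have := congrArg Fin.val h
          simpa [Nat.mod_eq_of_lt ha, Nat.mod_eq_of_lt hb] using this
        have hij := vv_inj hm a.1.isLt b.1.isLt (u_bound m a.2) (u_bound m b.2) hv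
        obtain ⟨a1, a2⟩ := a; obtain ⟨b1, b2⟩ := b
        obtain ⟨hi, hj⟩ := hij
        have : a1 = b1 := Fin.ext hi
        subst this
        have : a2 = b2 := Fin.ext hj
        subst this
        rfl
      · intro y
        obtain ⟨w, u, hw, hu, hy⟩ := vdecomp hm y.isLt
        refine ⟨⟨⟨w, hw⟩, ⟨u, ?_⟩⟩, ?_⟩
        · unfold vSize
          simp only
          split_ifs at hu ⊢ <;> omega
        · apply Fin.ext
          show vv m w u % (m + 2) = (y : ℕ)
          rw [Nat.mod_eq_of_lt (vv_lt hm hw hu)]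
          exact hy.symm)

lemma eP_val (x : ST m hm) : ((eP m hm x : Fin (m+2)) : ℕ) = pos m x.1 x.2 := by
  show pos m x.1 x.2 % (m + 2) = _
  exact Nat.mod_eq_of_lt (pos_lt hm x.1.isLt (j_bound m hm x.2))

lemma eV_val (x : VT m) : ((eV m hm x : Fin (m+2)) : ℕ) = vv m x.1 x.2 := by
  show vv m x.1 x.2 % (m + 2) = _
  exact Nat.mod_eq_of_lt (vv_lt hm x.1.isLt (u_bound m x.2))

lemma size_eq (i : Fin m) : (endArgs (oscPerm m hm) i).1 = vSize m ((oscPerm m hm) i) := by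
  rw [args_fst m hm i]
  unfold vSize
  by_cases h : (i : ℕ) = 1 ∨ (i : ℕ) = P2 m
  · rw [if_pos h, if_pos (by rw [oscPerm_apply m hm i]; exact (sp_corr hm i.isLt).mp h)]
  · have hn : ¬ ((((oscPerm m hm) i) : ℕ) = 0 ∨ (((oscPerm m hm) i) : ℕ) = V2 m) := by
      rw [oscPerm_apply m hm i]
      exact fun c => h ((sp_corr hm i.isLt).mpr c)
    rw [if_neg h, if_neg hn]

noncomputable def sigmaST : ST m hm ≃ VT m :=
  Equiv.sigmaCongr (oscPerm m hm) (fun i => finCongr (size_eq m hm i))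

lemma sigmaST_apply (x : ST m hm) :
    sigmaST m hm x = ⟨(oscPerm m hm) x.1, finCongr (size_eq m hm x.1) x.2⟩ := rfl

noncomputable def pim : Equiv.Perm (Fin (m + 2)) :=
  ((eP m hm).symm.trans (sigmaST m hm)).trans (eV m hm)

lemma pim_val (x : ST m hm) :
    ((pim m hm (eP m hm x)) : ℕ) = vv m (sval m x.1) (x.2 : ℕ) := by
  unfold pim
  rw [Equiv.trans_apply, Equiv.trans_apply, Equiv.symm_apply_apply, sigmaST_apply]
  rw [eV_val m hm]
  simp [oscPerm_apply m hm]

end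
end UPf
namespace UPf
section
variable (m : ℕ) (hm : 4 ≤ m)

lemma jb' {i : Fin m} (j : Fin (endArgs (oscPerm m hm) i).1) :
    (j : ℕ) ≤ if sval m (i : ℕ) = 0 ∨ sval m (i : ℕ) = V2 m then 1 else 0 := by
  have h := j_bound m hm j
  by_cases hc : (i : ℕ) = 1 ∨ (i : ℕ) = P2 m
  · rw [if_pos hc] at h; rw [if_pos ((sp_corr hm i.isLt).mp hc)]; exact h
  · rw [if_neg hc] at h; rw [if_neg (fun c => hc ((sp_corr hm i.isLt).mpr c))]; exact h

lemma eP_lt_iff (s t : ST m hm) :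
    eP m hm s < eP m hm t ↔ ((s.1 : ℕ) < (t.1 : ℕ) ∨ ((s.1 : ℕ) = (t.1 : ℕ) ∧ (s.2 : ℕ) < (t.2 : ℕ))) := by
  rw [Fin.lt_def, eP_val m hm s, eP_val m hm t]
  exact pos_lt_iff hm s.1.isLt t.1.isLt (j_bound m hm s.2) (j_bound m hm t.2)

lemma pim_lt_iff (s t : ST m hm) :
    pim m hm (eP m hm s) < pim m hm (eP m hm t) ↔
      (sval m (s.1 : ℕ) < sval m (t.1 : ℕ) ∨ ((s.1 : ℕ) = (t.1 : ℕ) ∧ (s.2 : ℕ) < (t.2 : ℕ))) := by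
  rw [Fin.lt_def, pim_val m hm s, pim_val m hm t]
  rw [vv_lt_iff hm (sval_lt hm s.1.isLt) (sval_lt hm t.1.isLt) (jb' m hm s.2) (jb' m hm t.2)]
  constructor
  · rintro (h | ⟨he, hj⟩)
    · exact Or.inl h
    · exact Or.inr ⟨sval_inj hm s.1.isLt t.1.isLt he, hj⟩
  · rintro (h | ⟨he, hj⟩)
    · exact Or.inl h
    · exact Or.inr ⟨by rw [he], hj⟩

lemma isInflation_pim :
    IsInflation (oscPerm m hm) (endArgs (oscPerm m hm))
      (⟨m + 2, pim m hm⟩ : PermS) := by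
  refine ⟨eP m hm, ?_, ?_, ?_, ?_⟩
  · intro i i' j j' hii
    exact (eP_lt_iff m hm ⟨i, j⟩ ⟨i', j'⟩).mpr (Or.inl hii)
  · intro i j j' hjj
    exact (eP_lt_iff m hm ⟨i, j⟩ ⟨i, j'⟩).mpr (Or.inr ⟨rfl, hjj⟩)
  · intro i i' j j' hss
    refine (pim_lt_iff m hm ⟨i, j⟩ ⟨i', j'⟩).mpr (Or.inl ?_)
    rw [← oscPerm_apply m hm i, ← oscPerm_apply m hm i']
    exact hss
  · intro i j j' hjj
    exact (pim_lt_iff m hm ⟨i, j⟩ ⟨i, j'⟩).mpr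
      (Or.inr ⟨rfl, (args_lt_iff m hm i j j').mp hjj⟩)

/-- the label of a position -/
noncomputable def lab (x : Fin (m + 2)) : ℕ := rho m ((((eP m hm).symm x).1 : Fin m) : ℕ)

lemma lab_eP (s : ST m hm) : lab m hm (eP m hm s) = rho m (s.1 : ℕ) := by
  unfold lab; rw [Equiv.symm_apply_apply]

lemma lab_le (x : Fin (m + 2)) : lab m hm x ≤ m - 1 :=
  rho_le hm (((eP m hm).symm x).1).isLt

lemma lab_mid_inj (x y : Fin (m + 2)) (hxy : lab m hm x = lab m hm y)
    (h1 : 1 ≤ lab m hm x) (h2 : lab m hm x ≤ m - 2) : x = y := by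
  obtain ⟨s, rfl⟩ := (eP m hm).surjective x
  obtain ⟨t, rfl⟩ := (eP m hm).surjective y
  rw [lab_eP m hm s] at hxy h1 h2
  rw [lab_eP m hm t] at hxy
  obtain ⟨s1, s2⟩ := s; obtain ⟨t1, t2⟩ := t
  simp only at hxy h1 h2
  have hii : (s1 : ℕ) = (t1 : ℕ) := rho_inj hm s1.isLt t1.isLt hxy
  have heq : s1 = t1 := Fin.ext hii
  cases heq
  have hnsp : ¬ ((s1 : ℕ) = 1 ∨ (s1 : ℕ) = P2 m) := by
    intro hc
    have := (rho_special hm s1.isLt).mp hc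
    omega
  have hjs := j_bound m hm s2
  have hjt := j_bound m hm t2
  rw [if_neg hnsp] at hjs hjt
  have : s2 = t2 := Fin.ext (by omega)
  cases this
  rfl

lemma adj_iff (x y : Fin (m + 2)) :
    ((x < y ∧ pim m hm y < pim m hm x) ∨ (y < x ∧ pim m hm x < pim m hm y))
      ↔ DiffOne (lab m hm x) (lab m hm y) := by
  obtain ⟨s, rfl⟩ := (eP m hm).surjective x
  obtain ⟨t, rfl⟩ := (eP m hm).surjective y
  rw [lab_eP m hm s, lab_eP m hm t]
  rw [← C3 hm s.1.isLt t.1.isLt]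
  rw [eP_lt_iff m hm s t, eP_lt_iff m hm t s, pim_lt_iff m hm s t, pim_lt_iff m hm t s]
  have hinj : (s.1 : ℕ) = (t.1 : ℕ) → sval m (s.1 : ℕ) = sval m (t.1 : ℕ) := fun h => by rw [h]
  have hinj2 : sval m (s.1 : ℕ) = sval m (t.1 : ℕ) → (s.1 : ℕ) = (t.1 : ℕ) :=
    fun h => sval_inj hm s.1.isLt t.1.isLt h
  constructor
  · rintro (⟨(ha | ⟨ha, hb⟩), (hc | ⟨hc, hd⟩)⟩ | ⟨(ha | ⟨ha, hb⟩), (hc | ⟨hc, hd⟩)⟩)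
    · exact Or.inl ⟨ha, hc⟩
    · omega
    · have := hinj ha; omega
    · omega
    · exact Or.inr ⟨ha, hc⟩
    · omega
    · have := hinj ha.symm; omega
    · omega
  · rintro (⟨ha, hb⟩ | ⟨ha, hb⟩)
    · exact Or.inl ⟨Or.inl ha, Or.inl hb⟩
    · exact Or.inr ⟨Or.inl ha, Or.inl hb⟩

end
end UPf
namespace UPf

lemma aux_le {N : ℕ} (g : Fin N → Fin N) (hg : StrictMono g) : ∀ a : Fin N, (a : ℕ) ≤ g a := by
  have H : ∀ k : ℕ, ∀ a : Fin N, (a : ℕ) = k → k ≤ g a := by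
    intro k
    induction k with
    | zero => intro a _; exact Nat.zero_le _
    | succ n ih =>
      intro a ha
      have hb : n < N := by omega
      have hlt : (⟨n, hb⟩ : Fin N) < a := by
        rw [Fin.lt_def]; show n < (a : ℕ); omega
      have h1 := ih ⟨n, hb⟩ rfl
      have h2 := hg hlt
      rw [Fin.lt_def] at h2
      omega
  intro a; exact H (a : ℕ) a rfl

lemma equiv_strictMono_id {N : ℕ} (f : Fin N ≃ Fin N) (h : StrictMono (f : Fin N → Fin N)) :
    ∀ a, f a = a := by
  have hsymm : StrictMono (f.symm : Fin N → Fin N) := by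
    intro a b hab
    rcases lt_trichotomy (f.symm a) (f.symm b) with hc | hc | hc
    · exact hc
    · exact absurd (by rw [← f.apply_symm_apply a, ← f.apply_symm_apply b, hc]) (ne_of_lt hab)
    · have := h hc
      rw [f.apply_symm_apply, f.apply_symm_apply] at this
      exact absurd (this.trans hab) (lt_irrefl _)
  intro a
  have h1 := aux_le _ h a
  have h2 := aux_le _ hsymm (f a)
  apply Fin.ext
  have h3 : (f.symm (f a) : ℕ) = (a : ℕ) := by rw [f.symm_apply_apply]
  omega


section
variable (m : ℕ) (hm : 4 ≤ m)

lemma osc_unique (σ : Equiv.Perm (Fin m)) (h : IsOsc m σ) : σ = oscPerm m hm := by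
  apply Equiv.ext
  intro i
  apply Fin.ext
  have h1 := h i
  have h2 := isOsc_oscPerm m hm i
  omega

lemma e_unique {N : ℕ} (e : ST m hm ≃ Fin N) (hNe : N = m + 2)
    (h1 : ∀ (i i' : Fin m) (j : Fin (endArgs (oscPerm m hm) i).1)
      (j' : Fin (endArgs (oscPerm m hm) i').1), i < i' → e ⟨i, j⟩ < e ⟨i', j'⟩)
    (h2 : ∀ (i : Fin m) (j j' : Fin (endArgs (oscPerm m hm) i).1),
      j < j' → e ⟨i, j⟩ < e ⟨i, j'⟩) :
    ∀ s, (e s : ℕ) = (eP m hm s : ℕ) := by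
  subst hNe
  have key : ∀ s t : ST m hm,
      ((s.1 : ℕ) < (t.1 : ℕ) ∨ ((s.1 : ℕ) = (t.1 : ℕ) ∧ (s.2 : ℕ) < (t.2 : ℕ))) →
      e s < e t := by
    rintro ⟨s1, s2⟩ ⟨t1, t2⟩ (h | ⟨ha, hb⟩)
    · exact h1 s1 t1 s2 t2 h
    · have : s1 = t1 := Fin.ext ha
      cases this
      exact h2 s1 s2 t2 hb
  have hiff : ∀ s t : ST m hm, e s < e t ↔ eP m hm s < eP m hm t := by
    intro s t
    constructor
    · intro hlt
      rcases Nat.lt_trichotomy (s.1 : ℕ) (t.1 : ℕ) with hc | hc | hc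
      · exact (eP_lt_iff m hm s t).mpr (Or.inl hc)
      · obtain ⟨s1, s2⟩ := s; obtain ⟨t1, t2⟩ := t
        have : s1 = t1 := Fin.ext hc
        cases this
        rcases Nat.lt_trichotomy (s2 : ℕ) (t2 : ℕ) with hd | hd | hd
        · exact (eP_lt_iff m hm ⟨s1, s2⟩ ⟨s1, t2⟩).mpr (Or.inr ⟨rfl, hd⟩)
        · have : s2 = t2 := Fin.ext hd
          cases this
          exact absurd hlt (lt_irrefl _)
        · exact absurd (key ⟨s1, t2⟩ ⟨s1, s2⟩ (Or.inr ⟨rfl, hd⟩)) (fun c => absurd (c.trans hlt) (lt_irrefl _))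
      · exact absurd (key t s (Or.inl hc)) (fun c => absurd (c.trans hlt) (lt_irrefl _))
    · intro hlt
      rcases (eP_lt_iff m hm s t).mp hlt with hc | hc
      · exact key s t (Or.inl hc)
      · exact key s t (Or.inr hc)
  have hsm : StrictMono (((eP m hm).symm.trans e : Fin (m+2) ≃ Fin (m+2)) : Fin (m+2) → Fin (m+2)) := by
    intro a b hab
    show e ((eP m hm).symm a) < e ((eP m hm).symm b)
    rw [hiff]
    rwa [Equiv.apply_symm_apply, Equiv.apply_symm_apply]
  have hid := equiv_strictMono_id _ hsm
  intro s
  have := hid (eP m hm s)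
  have h' : e ((eP m hm).symm (eP m hm s)) = eP m hm s := this
  rw [Equiv.symm_apply_apply] at h'
  rw [h']

lemma infl_unique (p : PermS)
    (hp : IsInflation (oscPerm m hm) (endArgs (oscPerm m hm)) p) :
    p = ⟨m + 2, pim m hm⟩ := by
  obtain ⟨n, π⟩ := p
  obtain ⟨e, h1, h2, h3, h4⟩ := hp
  have hn : n = m + 2 := by
    have : Nonempty (Fin n ≃ Fin (m + 2)) := ⟨e.symm.trans (eP m hm)⟩
    exact (Fin.equiv_iff_eq.mp this)
  subst hn
  have hee : ∀ s : ST m hm, (e s : ℕ) = (eP m hm s : ℕ) := e_unique m hm e rfl h1 h2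
  have heef : ∀ s : ST m hm, e s = eP m hm s := fun s => Fin.ext (hee s)
  -- comparison transfer for π
  have hkey : ∀ s t : ST m hm,
      (sval m (s.1 : ℕ) < sval m (t.1 : ℕ) ∨ ((s.1 : ℕ) = (t.1 : ℕ) ∧ (s.2 : ℕ) < (t.2 : ℕ))) →
      π (eP m hm s) < π (eP m hm t) := by
    rintro ⟨s1, s2⟩ ⟨t1, t2⟩ (h | ⟨ha, hb⟩)
    · rw [← heef ⟨s1, s2⟩, ← heef ⟨t1, t2⟩]
      refine h3 s1 t1 s2 t2 ?_
      rw [Fin.lt_def, oscPerm_apply m hm s1, oscPerm_apply m hm t1]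
      exact h
    · have : s1 = t1 := Fin.ext ha
      cases this
      rw [← heef ⟨s1, s2⟩, ← heef ⟨s1, t2⟩]
      exact h4 s1 s2 t2 ((args_lt_iff m hm s1 s2 t2).mpr hb)
  have hiff : ∀ s t : ST m hm, π (eP m hm s) < π (eP m hm t) ↔
      pim m hm (eP m hm s) < pim m hm (eP m hm t) := by
    intro s t
    rw [pim_lt_iff m hm s t]
    constructor
    · intro hlt
      rcases Nat.lt_trichotomy (sval m (s.1 : ℕ)) (sval m (t.1 : ℕ)) with hc | hc | hc
      · exact Or.inl hc
      · have hfe : (s.1 : ℕ) = (t.1 : ℕ) := sval_inj hm s.1.isLt t.1.isLt hc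
        obtain ⟨s1, s2⟩ := s; obtain ⟨t1, t2⟩ := t
        have : s1 = t1 := Fin.ext hfe
        cases this
        rcases Nat.lt_trichotomy (s2 : ℕ) (t2 : ℕ) with hd | hd | hd
        · exact Or.inr ⟨rfl, hd⟩
        · have : s2 = t2 := Fin.ext hd
          cases this
          exact absurd hlt (lt_irrefl _)
        · exact absurd ((hkey ⟨s1, t2⟩ ⟨s1, s2⟩ (Or.inr ⟨rfl, hd⟩)).trans hlt) (lt_irrefl _)
      · exact absurd ((hkey t s (Or.inl hc)).trans hlt) (lt_irrefl _)
    · intro hc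
      exact hkey s t hc
  have hiff' : ∀ a b : Fin (m + 2), π a < π b ↔ pim m hm a < pim m hm b := by
    intro a b
    obtain ⟨s, rfl⟩ := (eP m hm).surjective a
    obtain ⟨t, rfl⟩ := (eP m hm).surjective b
    exact hiff s t
  have hsm : StrictMono ((π.symm.trans (pim m hm) : Fin (m+2) ≃ Fin (m+2)) :
      Fin (m+2) → Fin (m+2)) := by
    intro a b hab
    show pim m hm (π.symm a) < pim m hm (π.symm b)
    rw [← hiff']
    rwa [Equiv.apply_symm_apply, Equiv.apply_symm_apply]
  have hid := equiv_strictMono_id _ hsm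
  have hpi : π = pim m hm := by
    apply Equiv.ext
    intro x
    have := hid (π x)
    have h' : pim m hm (π.symm (π x)) = π x := this
    rw [Equiv.symm_apply_apply] at h'
    rw [← h']
  rw [hpi]

lemma mem_unique (p : PermS)
    (hp : ∃ σ : Equiv.Perm (Fin m), IsOsc m σ ∧ IsInflation σ (endArgs σ) p) :
    p = ⟨m + 2, pim m hm⟩ := by
  obtain ⟨σ, hosc, hinf⟩ := hp
  have hσ : σ = oscPerm m hm := osc_unique m hm σ hosc
  subst hσ
  exact infl_unique m hm p hinf

end
end UPf
namespace UPf
section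
variable (m : ℕ) (hm : 4 ≤ m)

def stOf (i j : ℕ) (hi : i < m) (hj : j ≤ if i = 1 ∨ i = P2 m then 1 else 0) : ST m hm :=
  ⟨⟨i, hi⟩, ⟨j, by rw [args_fst m hm ⟨i, hi⟩]; simp only; split_ifs at hj ⊢ <;> omega⟩⟩

lemma lab_stOf (i j : ℕ) (hi : i < m) (hj : j ≤ if i = 1 ∨ i = P2 m then 1 else 0) :
    lab m hm (eP m hm (stOf m hm i j hi hj)) = rho m i := by
  rw [lab_eP]
  rfl

lemma stOf_ne (i j i' j' : ℕ) (hi : i < m) (hj : j ≤ if i = 1 ∨ i = P2 m then 1 else 0)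
    (hi' : i' < m) (hj' : j' ≤ if i' = 1 ∨ i' = P2 m then 1 else 0)
    (hne : ¬ (i = i' ∧ j = j')) :
    eP m hm (stOf m hm i j hi hj) ≠ eP m hm (stOf m hm i' j' hi' hj') := by
  intro h
  have hv := congrArg Fin.val h
  rw [eP_val, eP_val] at hv
  exact hne (pos_inj hm hi hi' hj hj' hv)

lemma deg3 (t u v w : Fin (m + 2)) (huv : u ≠ v) (huw : u ≠ w) (hvw : v ≠ w)
    (h1 : DiffOne (lab m hm u) (lab m hm t)) (h2 : DiffOne (lab m hm v) (lab m hm t))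
    (h3 : DiffOne (lab m hm w) (lab m hm t)) :
    lab m hm t = 1 ∨ lab m hm t = m - 2 := by
  by_contra hc
  push_neg at hc
  obtain ⟨hc1, hc2⟩ := hc
  have pair : ∀ a b : Fin (m + 2), a ≠ b → DiffOne (lab m hm a) (lab m hm t) →
      lab m hm a = lab m hm b → False := by
    intro a b hab da heq
    have hla := lab_le m hm a
    have hlt := lab_le m hm t
    refine hab (lab_mid_inj m hm a b heq ?_ ?_)
    · unfold DiffOne at da; omega
    · unfold DiffOne at da; omega
  have htri : lab m hm u = lab m hm v ∨ lab m hm u = lab m hm w ∨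
      lab m hm v = lab m hm w := by
    unfold DiffOne at h1 h2 h3; omega
  rcases htri with h | h | h
  · exact pair u v huv h1 h
  · exact pair u w huw h1 h
  · exact pair v w hvw h2 h

end

lemma no_contains (m m' : ℕ) (hm : 4 ≤ m) (hm' : 4 ≤ m') (hlt : m < m') :
    ¬ PContains (pim m hm) (pim m' hm') := by
  rintro ⟨f, hf⟩
  have finj : Function.Injective (f : Fin (m + 2) → Fin (m' + 2)) := f.strictMono.injective
  have hadj : ∀ x y : Fin (m + 2), DiffOne (lab m hm x) (lab m hm y) →
      DiffOne (lab m' hm' (f x)) (lab m' hm' (f y)) := by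
    intro x y h
    rw [← adj_iff m' hm' (f x) (f y)]
    rcases (adj_iff m hm x y).mpr h with ⟨hxy, hv⟩ | ⟨hxy, hv⟩
    · exact Or.inl ⟨f.strictMono hxy, (hf _ _).mp hv⟩
    · exact Or.inr ⟨f.strictMono hxy, (hf _ _).mp hv⟩
  classical
  let wfin : ℕ → Fin (m + 2) := fun ℓ =>
    if h : 1 ≤ ℓ ∧ ℓ ≤ m - 2 then
      eP m hm (stOf m hm (blkOf ℓ) 0 (blkOf_lt hm h.1 h.2) (Nat.zero_le _)) else ⟨0, by omega⟩
  have labw : ∀ ℓ, 1 ≤ ℓ → ℓ ≤ m - 2 → lab m hm (wfin ℓ) = ℓ := by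
    intro ℓ h1 h2
    show lab m hm (dite _ _ _) = ℓ
    rw [dif_pos ⟨h1, h2⟩, lab_stOf]
    exact rho_blkOf hm h1 h2
  set g : ℕ → ℕ := fun ℓ => lab m' hm' (f (wfin ℓ)) with hg
  have steps : ∀ ℓ, 1 ≤ ℓ → ℓ + 1 ≤ m - 2 → DiffOne (g ℓ) (g (ℓ + 1)) := by
    intro ℓ h1 h2
    apply hadj
    rw [labw ℓ h1 (by omega), labw (ℓ + 1) (by omega) h2]
    exact Or.inr rfl
  have lip : ∀ d, d ≤ m - 3 → g (1 + d) ≤ g 1 + d ∧ g 1 ≤ g (1 + d) + d := by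
    intro d
    induction d with
    | zero => intro _; simp
    | succ n ih =>
      intro hd
      have h1 := ih (by omega)
      have h2 := steps (1 + n) (by omega) (by omega)
      unfold DiffOne at h2
      have : 1 + (n + 1) = (1 + n) + 1 := by omega
      rw [this]
      omega
  -- endpoint x0
  have hx0 : lab m hm (wfin 1) = 1 := labw 1 (by omega) (by omega)
  have hq : lab m hm (wfin (m - 2)) = m - 2 := labw (m - 2) (by omega) (by omega)
  -- neighbours of x0 : the two label-0 vertices and the label-2 vertex
  have hb1 : (1 : ℕ) ≤ if (1 : ℕ) = 1 ∨ (1 : ℕ) = P2 m then 1 else 0 := by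
    rw [if_pos (Or.inl rfl)]
  have hb0 : (0 : ℕ) ≤ if (1 : ℕ) = 1 ∨ (1 : ℕ) = P2 m then 1 else 0 := by omega
  have hP2lt : P2 m < m := by unfold P2; split_ifs <;> omega
  have hbP1 : (1 : ℕ) ≤ if P2 m = 1 ∨ P2 m = P2 m then 1 else 0 := by
    rw [if_pos (Or.inr rfl)]
  have hbP0 : (0 : ℕ) ≤ if P2 m = 1 ∨ P2 m = P2 m then 1 else 0 := by omega
  have h1m : (1 : ℕ) < m := by omega
  set u1 := eP m hm (stOf m hm 1 0 h1m hb0) with hu1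
  set u2 := eP m hm (stOf m hm 1 1 h1m hb1) with hu2
  have hlu1 : lab m hm u1 = 0 := by rw [hu1, lab_stOf]; exact rho_one hm
  have hlu2 : lab m hm u2 = 0 := by rw [hu2, lab_stOf]; exact rho_one hm
  have hlw2 : lab m hm (wfin 2) = 2 := labw 2 (by omega) (by omega)
  -- x0 has three distinct neighbours
  have hA : lab m' hm' (f (wfin 1)) = 1 ∨ lab m' hm' (f (wfin 1)) = m' - 2 := by
    apply deg3 m' hm' (f (wfin 1)) (f u1) (f u2) (f (wfin 2))
    · intro h; exact stOf_ne m hm 1 0 1 1 h1m hb0 h1m hb1 (by omega) (finj h)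
    · intro h
      apply absurd (congrArg (lab m hm) (finj h))
      rw [hlu1, hlw2]; omega
    · intro h
      apply absurd (congrArg (lab m hm) (finj h))
      rw [hlu2, hlw2]; omega
    · apply hadj; rw [hlu1, hx0]; exact Or.inr rfl
    · apply hadj; rw [hlu2, hx0]; exact Or.inr rfl
    · apply hadj; rw [hlw2, hx0]; exact Or.inl rfl
  -- q has three distinct neighbours
  set v2 := eP m hm (stOf m hm (P2 m) 0 hP2lt hbP0) with hv2
  set v3 := eP m hm (stOf m hm (P2 m) 1 hP2lt hbP1) with hv3
  have hlv2 : lab m hm v2 = m - 1 := by rw [hv2, lab_stOf]; exact rho_P2 hm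
  have hlv3 : lab m hm v3 = m - 1 := by rw [hv3, lab_stOf]; exact rho_P2 hm
  have hlw3 : lab m hm (wfin (m - 3)) = m - 3 := labw (m - 3) (by omega) (by omega)
  have hB : lab m' hm' (f (wfin (m - 2))) = 1 ∨ lab m' hm' (f (wfin (m - 2))) = m' - 2 := by
    apply deg3 m' hm' (f (wfin (m - 2))) (f (wfin (m - 3))) (f v2) (f v3)
    · intro h
      apply absurd (congrArg (lab m hm) (finj h))
      rw [hlw3, hlv2]; omega
    · intro h
      apply absurd (congrArg (lab m hm) (finj h))
      rw [hlw3, hlv3]; omega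
    · intro h; exact stOf_ne m hm (P2 m) 0 (P2 m) 1 hP2lt hbP0 hP2lt hbP1 (by omega) (finj h)
    · apply hadj; rw [hlw3, hq]; exact Or.inr (by omega)
    · apply hadj; rw [hlv2, hq]; exact Or.inl (by omega)
    · apply hadj; rw [hlv3, hq]; exact Or.inl (by omega)
  -- the two images are distinct
  have hne : f (wfin 1) ≠ f (wfin (m - 2)) := by
    intro h
    apply absurd (congrArg (lab m hm) (finj h))
    rw [hx0, hq]; omega
  have hlabne : lab m' hm' (f (wfin 1)) ≠ lab m' hm' (f (wfin (m - 2))) := by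
    intro h
    exact hne (lab_mid_inj m' hm' _ _ h (by omega) (by omega))
  have hfin := lip (m - 3) (le_refl _)
  have h1m2 : 1 + (m - 3) = m - 2 := by omega
  rw [h1m2] at hfin
  show False
  rw [hg] at hfin
  simp only at hfin
  omega

end UPf

/-- The set U of permutations obtained by inflating the end entries of the increasing
oscillations of length m ≥ 4 by 12 is an infinite antichain. -/
theorem U_is_infinite_antichain :
    ({p : PermS | ∃ m : ℕ, 4 ≤ m ∧ ∃ σ : Equiv.Perm (Fin m),
        IsOsc m σ ∧ IsInflation σ (endArgs σ) p} : Set PermS).Infinite ∧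
    IsAntichain ContainsS
      {p : PermS | ∃ m : ℕ, 4 ≤ m ∧ ∃ σ : Equiv.Perm (Fin m),
        IsOsc m σ ∧ IsInflation σ (endArgs σ) p} := by
  constructor
  · apply Set.infinite_of_injective_forall_mem
      (f := fun k : ℕ => (⟨(k + 4) + 2, UPf.pim (k + 4) (by omega)⟩ : PermS))
    · intro a b h
      have := congrArg Sigma.fst h
      simpa using this
    · intro k
      exact ⟨k + 4, by omega, UPf.oscPerm (k + 4) (by omega),
        UPf.isOsc_oscPerm (k + 4) (by omega), UPf.isInflation_pim (k + 4) (by omega)⟩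
  · intro p hp q hq hne hcont
    obtain ⟨ma, hma, hpw⟩ := hp
    obtain ⟨mb, hmb, hqw⟩ := hq
    have hpe : p = ⟨ma + 2, UPf.pim ma hma⟩ := UPf.mem_unique ma hma p hpw
    have hqe : q = ⟨mb + 2, UPf.pim mb hmb⟩ := UPf.mem_unique mb hmb q hqw
    subst hpe; subst hqe
    rcases Nat.lt_trichotomy ma mb with h | h | h
    · exact UPf.no_contains ma mb hma hmb h hcont
    · subst h
      exact hne rfl
    · obtain ⟨f, -⟩ := hcont
      have hcard := Fintype.card_le_of_embedding f.toEmbedding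
      simp only [Fintype.card_fin] at hcard
      omega
end

section
/- Fix k ≥ 2, let c = k! - k² + 2k - 2, and let f(x) = (x^(k-1) + c·x^k)²·x^(2k) / (1 - x^(k-1) - c·x^k), expanded as a formal power series with coefficient sequence (u_n). Then the limit lim_{n→∞} u_n^(1/n) exists (the sequence has a proper exponential growth rate), and this growth rate tends to infinity as k → ∞. -/
/-!
For `c ≥ 0` the coefficients `w n` of `(1 - X^(k-1) - c X^k)⁻¹` satisfy
`w n = w (n - (k-1)) + c w (n - k)`, so they are nonnegative and supermultiplicative,
`w m * w n ≤ w (m + n)`, and (once `w k ≥ 1`) at least `1` from `n = (k-1)(k-2)` on, since every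
such `n` is a sum of `k - 1`'s and `k`'s. A multiplicative Fekete argument then gives
`w n ^ (1/n) → L = ⨆ n, w n ^ (1/n)`. With `P = X^(k-1) + c X^k` the generating function is
`X^(2k) ((1 - P)⁻¹ - 1 - P)`, so its `n`-th coefficient is `w (n - 2k)` for `n > 3k` and has the
same growth rate `L`. Finally `L ≥ w k ^ (1/k) ≥ c ^ (1/k) ≥ (k!/2) ^ (1/k) → ∞`.
-/

open Filter PowerSeries

/-- The generating function x^{2k}(x^{k-1}+c x^k)² / (1 - x^{k-1} - c x^k) with
c = k! - k² + 2k - 2, as a formal power series over ℝ. -/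
noncomputable def antichainGF (k : ℕ) : PowerSeries ℝ :=
  letI c : ℝ := (Nat.factorial k : ℝ) - (k : ℝ) ^ 2 + 2 * (k : ℝ) - 2
  (X ^ (k - 1) + C c * X ^ k) ^ 2 * X ^ (2 * k) *
    (1 - X ^ (k - 1) - C c * X ^ k)⁻¹

open Topology

section Supermultiplicative

variable {a : ℕ → ℝ}

theorem pow_mul_le_of_supermul (ha : ∀ n, 0 ≤ a n) (hmul : ∀ m n, a m * a n ≤ a (m + n))
    (m q r : ℕ) : a m ^ q * a r ≤ a (m * q + r) := by
  induction q with
  | zero => simp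
  | succ q ih =>
    calc a m ^ (q + 1) * a r = a m * (a m ^ q * a r) := by ring
      _ ≤ a m * a (m * q + r) := mul_le_mul_of_nonneg_left ih (ha m)
      _ ≤ a (m + (m * q + r)) := hmul _ _
      _ = a (m * (q + 1) + r) := by ring_nf

/-- Every `n ≥ p (p - 1)` is a sum of copies of `p` and `p + 1`. -/
theorem one_le_of_supermul (ha : ∀ n, 0 ≤ a n) (hmul : ∀ m n, a m * a n ≤ a (m + n))
    (h0 : 1 ≤ a 0) {p : ℕ} (hp : 0 < p) (hp₁ : 1 ≤ a p) (hp₂ : 1 ≤ a (p + 1)) {n : ℕ}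
    (hn : p * (p - 1) ≤ n) : 1 ≤ a n := by
  obtain ⟨q, r, hr, rfl⟩ : ∃ q r, r < p ∧ n = p * q + r :=
    ⟨n / p, n % p, Nat.mod_lt n hp, (Nat.div_add_mod n p).symm⟩
  have hrq : r ≤ q := by
    have : p * (p - 1) < p * (q + 1) := by linarith
    have := Nat.lt_of_mul_lt_mul_left this
    omega
  obtain ⟨d, rfl⟩ : ∃ d, q = r + d := ⟨q - r, by omega⟩
  have hsplit : p * (r + d) + r = p * d + ((p + 1) * r + 0) := by ring
  rw [hsplit]
  calc (1 : ℝ) ≤ a p ^ d * (a (p + 1) ^ r * a 0) :=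
        one_le_mul_of_one_le_of_one_le (one_le_pow₀ hp₁)
          (one_le_mul_of_one_le_of_one_le (one_le_pow₀ hp₂) h0)
    _ ≤ a p ^ d * a ((p + 1) * r + 0) :=
        mul_le_mul_of_nonneg_left (pow_mul_le_of_supermul ha hmul _ _ _) (pow_nonneg (ha p) d)
    _ ≤ a (p * d + ((p + 1) * r + 0)) := pow_mul_le_of_supermul ha hmul _ _ _

theorem tendsto_nat_div_div_add_atTop (m N : ℕ) :
    Tendsto (fun n : ℕ => ((n / m : ℕ) : ℝ) / ((n + N : ℕ) : ℝ)) atTop (𝓝 (m : ℝ)⁻¹) := by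
  have hdiv : Tendsto (fun n : ℕ => ((n / m : ℕ) : ℝ) / n) atTop (𝓝 (m : ℝ)⁻¹) := by
    refine ((tendsto_nat_floor_mul_div_atTop (inv_nonneg.2 m.cast_nonneg)).comp
      tendsto_natCast_atTop_atTop).congr fun n => ?_
    simp [← div_eq_inv_mul, Nat.floor_div_eq_div]
  have := hdiv.mul (tendsto_natCast_div_add_atTop (N : ℝ))
  rw [mul_one] at this
  refine this.congr fun n => ?_
  rcases n.eq_zero_or_pos with rfl | hn
  · simp
  · push_cast
    field_simp

theorem bddAbove_rpow_inv_of_le_pow (ha : ∀ n, 0 ≤ a n) {B : ℝ} (hB : 1 ≤ B)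
    (h : ∀ n, a n ≤ B ^ n) : BddAbove (Set.range fun n : ℕ => a n ^ (n : ℝ)⁻¹) := by
  refine ⟨B, ?_⟩
  rintro _ ⟨n, rfl⟩
  rcases n.eq_zero_or_pos with rfl | hn
  · simpa using hB
  · calc a n ^ (n : ℝ)⁻¹ ≤ (B ^ n) ^ (n : ℝ)⁻¹ :=
          Real.rpow_le_rpow (ha n) (h n) (by positivity)
      _ = B := Real.pow_rpow_inv_natCast (by linarith) hn.ne'

theorem pow_div_le_of_supermul (ha : ∀ n, 0 ≤ a n) (hmul : ∀ m n, a m * a n ≤ a (m + n))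
    {N : ℕ} (hN : ∀ n ≥ N, 1 ≤ a n) (m n : ℕ) : a m ^ (n / m) ≤ a (n + N) := by
  calc a m ^ (n / m) ≤ a m ^ (n / m) * a (n % m + N) :=
        le_mul_of_one_le_right (pow_nonneg (ha m) _) (hN _ (Nat.le_add_left N _))
    _ ≤ a (m * (n / m) + (n % m + N)) := pow_mul_le_of_supermul ha hmul _ _ _
    _ = a (n + N) := by rw [← add_assoc, Nat.div_add_mod]

/-- Fekete's lemma in multiplicative form, for sequences that are eventually at least `1`. -/
theorem tendsto_rpow_inv_iSup_of_supermul (ha : ∀ n, 0 ≤ a n)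
    (hmul : ∀ m n, a m * a n ≤ a (m + n)) {N : ℕ} (hN : ∀ n ≥ N, 1 ≤ a n)
    (hbdd : BddAbove (Set.range fun n : ℕ => a n ^ (n : ℝ)⁻¹)) :
    Tendsto (fun n : ℕ => a n ^ (n : ℝ)⁻¹) atTop (𝓝 (⨆ n : ℕ, a n ^ (n : ℝ)⁻¹)) := by
  rw [← tendsto_add_atTop_iff_nat N, tendsto_order]
  refine ⟨fun t ht => ?_, fun t ht =>
    Eventually.of_forall fun n => (le_ciSup hbdd _).trans_lt ht⟩
  obtain ⟨m, hm⟩ := exists_lt_of_lt_ciSup ht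
  by_cases ht₁ : t < 1
  · exact Eventually.of_forall fun n =>
      ht₁.trans_le (Real.one_le_rpow (hN _ (Nat.le_add_left N n)) (by positivity))
  have ham : 0 < a m := (ha m).lt_of_ne fun h => by
    rw [← h] at hm
    linarith [Real.zero_rpow_le_one (m : ℝ)⁻¹]
  have hlim : Tendsto (fun n : ℕ => a m ^ (((n / m : ℕ) : ℝ) / ((n + N : ℕ) : ℝ))) atTop
      (𝓝 (a m ^ (m : ℝ)⁻¹)) :=
    tendsto_const_nhds.rpow (tendsto_nat_div_div_add_atTop m N) (Or.inl ham.ne')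
  filter_upwards [hlim.eventually (lt_mem_nhds hm)] with n hn
  refine hn.trans_le ?_
  rw [div_eq_mul_inv, Real.rpow_mul ham.le, Real.rpow_natCast]
  exact Real.rpow_le_rpow (by positivity) (pow_div_le_of_supermul ha hmul hN m n) (by positivity)

end Supermultiplicative

theorem Filter.Tendsto.rpow_inv_comp_sub {a : ℕ → ℝ} {L : ℝ} (ha : ∀ n, 0 ≤ a n)
    (h : Tendsto (fun n : ℕ => a n ^ (n : ℝ)⁻¹) atTop (𝓝 L)) (s : ℕ) :
    Tendsto (fun n : ℕ => a (n - s) ^ (n : ℝ)⁻¹) atTop (𝓝 L) := by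
  rw [← tendsto_add_atTop_iff_nat s]
  have := h.rpow (tendsto_natCast_div_add_atTop (s : ℝ)) (Or.inr one_pos)
  rw [Real.rpow_one] at this
  refine this.congr' ?_
  filter_upwards [eventually_gt_atTop 0] with n hn
  rw [Nat.add_sub_cancel, ← Real.rpow_mul (ha n)]
  push_cast
  field_simp

noncomputable def gfDenom (k : ℕ) (c : ℝ) : ℝ⟦X⟧ := 1 - X ^ (k - 1) - C c * X ^ k

noncomputable def invCoeff (k : ℕ) (c : ℝ) (n : ℕ) : ℝ := coeff n (gfDenom k c)⁻¹

section InvCoeff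

variable {k : ℕ} {c : ℝ}

theorem gfDenom_mul_inv (hk : 2 ≤ k) : gfDenom k c * (gfDenom k c)⁻¹ = 1 :=
  PowerSeries.mul_inv_cancel _ (by
    simp [gfDenom, show k - 1 ≠ 0 by omega, show k ≠ 0 by omega])

theorem invCoeff_zero (hk : 2 ≤ k) : invCoeff k c 0 = 1 := by
  simp [invCoeff, gfDenom, show k - 1 ≠ 0 by omega, show k ≠ 0 by omega]

theorem invCoeff_of_ne_zero (hk : 2 ≤ k) {n : ℕ} (hn : n ≠ 0) :
    invCoeff k c n = (if k - 1 ≤ n then invCoeff k c (n - (k - 1)) else 0) +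
      c * (if k ≤ n then invCoeff k c (n - k) else 0) := by
  have h := congrArg (coeff n) (gfDenom_mul_inv (c := c) hk)
  nth_rw 1 [gfDenom] at h
  rw [sub_mul, sub_mul, one_mul, mul_assoc, map_sub, map_sub, coeff_X_pow_mul',
    coeff_C_mul, coeff_X_pow_mul', coeff_one, if_neg hn] at h
  unfold invCoeff
  linarith

theorem invCoeff_nonneg (hk : 2 ≤ k) (hc : 0 ≤ c) (n : ℕ) : 0 ≤ invCoeff k c n := by
  induction n using Nat.strong_induction_on with
  | _ n ih =>
    rcases eq_or_ne n 0 with rfl | hn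
    · rw [invCoeff_zero hk]
      exact zero_le_one
    rw [invCoeff_of_ne_zero hk hn]
    refine add_nonneg ?_ (mul_nonneg hc ?_) <;> split_ifs <;>
      first | exact le_rfl | exact ih _ (by omega)

theorem invCoeff_mul_le (hk : 2 ≤ k) (hc : 0 ≤ c) (m n : ℕ) :
    invCoeff k c m * invCoeff k c n ≤ invCoeff k c (m + n) := by
  induction n using Nat.strong_induction_on with
  | _ n ih =>
    rcases eq_or_ne n 0 with rfl | hn
    · simp [invCoeff_zero hk]
    have step : ∀ j, 0 < j →
        invCoeff k c m * (if j ≤ n then invCoeff k c (n - j) else 0) ≤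
          if j ≤ m + n then invCoeff k c (m + n - j) else 0 := by
      intro j hj
      split_ifs with hjn hjmn hjmn
      · rw [show m + n - j = m + (n - j) by omega]
        exact ih _ (by omega)
      · omega
      · rw [mul_zero]
        exact invCoeff_nonneg hk hc _
      · rw [mul_zero]
    rw [invCoeff_of_ne_zero hk hn, invCoeff_of_ne_zero hk (by omega : m + n ≠ 0), mul_add,
      mul_left_comm]
    exact add_le_add (step _ (by omega)) (mul_le_mul_of_nonneg_left (step _ (by omega)) hc)

theorem invCoeff_le_pow (hk : 2 ≤ k) (hc : 0 ≤ c) (n : ℕ) : invCoeff k c n ≤ (1 + c) ^ n := by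
  induction n using Nat.strong_induction_on with
  | _ n ih =>
    rcases eq_or_ne n 0 with rfl | hn
    · simp [invCoeff_zero hk]
    have step : ∀ j, 0 < j →
        (if j ≤ n then invCoeff k c (n - j) else 0) ≤ (1 + c) ^ (n - 1) := by
      intro j hj
      split_ifs
      · exact (ih _ (by omega)).trans (pow_le_pow_right₀ (by linarith) (by omega))
      · positivity
    calc invCoeff k c n ≤ (1 + c) ^ (n - 1) + c * (1 + c) ^ (n - 1) := by
          rw [invCoeff_of_ne_zero hk hn]
          exact add_le_add (step _ (by omega))
            (mul_le_mul_of_nonneg_left (step _ (by omega)) hc)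
      _ = (1 + c) ^ n := by rw [← one_add_mul, ← pow_succ', Nat.sub_add_cancel (by omega)]

theorem invCoeff_sub_one (hk : 2 ≤ k) : invCoeff k c (k - 1) = 1 := by
  rw [invCoeff_of_ne_zero hk (by omega), if_pos le_rfl, if_neg (by omega), Nat.sub_self,
    invCoeff_zero hk, mul_zero, add_zero]

theorem le_invCoeff_self (hk : 2 ≤ k) (hc : 0 ≤ c) : c ≤ invCoeff k c k := by
  rw [invCoeff_of_ne_zero hk (by omega), if_pos (by omega), if_pos le_rfl, Nat.sub_self,
    invCoeff_zero hk, mul_one]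
  linarith [invCoeff_nonneg hk hc (k - (k - 1))]

theorem one_le_invCoeff (hk : 2 ≤ k) (hc : 0 ≤ c) (hk₁ : 1 ≤ invCoeff k c k) {n : ℕ}
    (hn : (k - 1) * (k - 2) ≤ n) : 1 ≤ invCoeff k c n :=
  one_le_of_supermul (invCoeff_nonneg hk hc) (invCoeff_mul_le hk hc) (invCoeff_zero hk).ge
    (p := k - 1) (by omega) (invCoeff_sub_one hk).ge (by rwa [Nat.sub_add_cancel (by omega)])
    (by rwa [show k - 1 - 1 = k - 2 by omega])

theorem bddAbove_invCoeff_rpow (hk : 2 ≤ k) (hc : 0 ≤ c) :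
    BddAbove (Set.range fun n : ℕ => invCoeff k c n ^ (n : ℝ)⁻¹) :=
  bddAbove_rpow_inv_of_le_pow (invCoeff_nonneg hk hc) (by linarith) (invCoeff_le_pow hk hc)

end InvCoeff

noncomputable def invCoeffGrowth (k : ℕ) (c : ℝ) : ℝ := ⨆ n : ℕ, invCoeff k c n ^ (n : ℝ)⁻¹

theorem tendsto_invCoeff_rpow {k : ℕ} {c : ℝ} (hk : 2 ≤ k) (hc : 0 ≤ c)
    (hk₁ : 1 ≤ invCoeff k c k) :
    Tendsto (fun n : ℕ => invCoeff k c n ^ (n : ℝ)⁻¹) atTop (𝓝 (invCoeffGrowth k c)) :=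
  tendsto_rpow_inv_iSup_of_supermul (invCoeff_nonneg hk hc) (invCoeff_mul_le hk hc)
    (fun _ hn => one_le_invCoeff hk hc hk₁ hn) (bddAbove_invCoeff_rpow hk hc)

theorem rpow_inv_le_invCoeffGrowth {k : ℕ} {c : ℝ} (hk : 2 ≤ k) (hc : 0 ≤ c) :
    c ^ (k : ℝ)⁻¹ ≤ invCoeffGrowth k c :=
  (Real.rpow_le_rpow hc (le_invCoeff_self hk hc) (by positivity)).trans
    (le_ciSup (bddAbove_invCoeff_rpow hk hc) k)

noncomputable def antichainConst (k : ℕ) : ℝ :=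
  (Nat.factorial k : ℝ) - (k : ℝ) ^ 2 + 2 * (k : ℝ) - 2

theorem two_mul_sq_le_factorial {k : ℕ} (hk : 5 ≤ k) : 2 * k ^ 2 ≤ k.factorial := by
  induction k, hk using Nat.le_induction with
  | base => decide
  | succ k hk ih =>
    rw [Nat.factorial_succ]
    nlinarith

theorem factorial_div_two_le_antichainConst {k : ℕ} (hk : 5 ≤ k) :
    (k.factorial : ℝ) / 2 ≤ antichainConst k := by
  have h : (2 * k ^ 2 : ℝ) ≤ k.factorial := by exact_mod_cast two_mul_sq_le_factorial hk
  have hk' : (5 : ℝ) ≤ k := by exact_mod_cast hk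
  unfold antichainConst
  nlinarith

theorem one_le_antichainConst {k : ℕ} (hk : 3 ≤ k) : 1 ≤ antichainConst k := by
  rcases (by omega : k = 3 ∨ k = 4 ∨ 5 ≤ k) with rfl | rfl | hk5
  · norm_num [antichainConst, Nat.factorial]
  · norm_num [antichainConst, Nat.factorial]
  · have h : (2 * k ^ 2 : ℝ) ≤ k.factorial := by exact_mod_cast two_mul_sq_le_factorial hk5
    have hk' : (5 : ℝ) ≤ k := by exact_mod_cast hk5
    nlinarith [factorial_div_two_le_antichainConst hk5]

theorem antichainConst_nonneg {k : ℕ} (hk : 2 ≤ k) : 0 ≤ antichainConst k := by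
  rcases hk.eq_or_lt with rfl | hk3
  · norm_num [antichainConst, Nat.factorial]
  · exact zero_le_one.trans (one_le_antichainConst hk3)

theorem one_le_invCoeff_antichainConst_self {k : ℕ} (hk : 2 ≤ k) :
    1 ≤ invCoeff k (antichainConst k) k := by
  rcases hk.eq_or_lt with rfl | hk3
  · calc (1 : ℝ) = invCoeff 2 (antichainConst 2) 1 * invCoeff 2 (antichainConst 2) 1 := by
          rw [invCoeff_sub_one (k := 2) le_rfl, one_mul]
      _ ≤ invCoeff 2 (antichainConst 2) 2 :=
          invCoeff_mul_le le_rfl (antichainConst_nonneg le_rfl) 1 1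
  · exact (one_le_antichainConst hk3).trans (le_invCoeff_self hk (antichainConst_nonneg hk))

theorem tendsto_antichainConst_rpow_inv :
    Tendsto (fun k : ℕ => antichainConst k ^ (k : ℝ)⁻¹) atTop atTop := by
  refine tendsto_atTop.2 fun B => ?_
  set B' := max B 1
  have hsmall := FloorSemiring.tendsto_pow_div_factorial_atTop B'
  filter_upwards [hsmall.eventually (gt_mem_nhds (half_pos one_pos)), eventually_ge_atTop 5]
    with k hk hk5
  have hpow : B' ^ k ≤ antichainConst k := by
    rw [div_lt_iff₀ (by positivity)] at hk
    linarith [factorial_div_two_le_antichainConst hk5]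
  calc B ≤ B' := le_max_left _ _
    _ = (B' ^ k) ^ (k : ℝ)⁻¹ := (Real.pow_rpow_inv_natCast (by positivity) (by omega)).symm
    _ ≤ antichainConst k ^ (k : ℝ)⁻¹ := Real.rpow_le_rpow (by positivity) hpow (by positivity)

theorem coeff_antichainGF {k : ℕ} (hk : 2 ≤ k) {n : ℕ} (hn : 3 * k < n) :
    coeff n (antichainGF k) = invCoeff k (antichainConst k) (n - 2 * k) := by
  set P : ℝ⟦X⟧ := X ^ (k - 1) + C (antichainConst k) * X ^ k
  have hP : gfDenom k (antichainConst k) * (gfDenom k (antichainConst k))⁻¹ = 1 :=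
    gfDenom_mul_inv hk
  have hGF : antichainGF k = X ^ (2 * k) * ((gfDenom k (antichainConst k))⁻¹ - 1 - P) := by
    change P ^ 2 * X ^ (2 * k) * (gfDenom k (antichainConst k))⁻¹ = _
    rw [show gfDenom k (antichainConst k) = 1 - P by unfold gfDenom P; ring] at hP ⊢
    linear_combination (-(X ^ (2 * k) : ℝ⟦X⟧) * (1 + P)) * hP
  rw [hGF, coeff_X_pow_mul', if_pos (by omega)]
  simp [P, invCoeff, coeff_X_pow, show n - 2 * k ≠ 0 by omega,
    show n - 2 * k ≠ k - 1 by omega, show n - 2 * k ≠ k by omega]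

/-- For each k ≥ 2 the coefficients u_n of the antichain generating function have a
proper exponential growth rate lim u_n^{1/n}, and this growth rate tends to infinity
with k. -/
theorem antichain_growth_rate :
    ∃ L : ℕ → ℝ,
      (∀ k : ℕ, 2 ≤ k →
        Tendsto (fun n : ℕ => (PowerSeries.coeff n (antichainGF k)) ^ ((1 : ℝ) / n))
          atTop (nhds (L k))) ∧
      Tendsto L atTop atTop := by
  refine ⟨fun k => invCoeffGrowth k (antichainConst k), fun k hk => ?_, ?_⟩
  · have hc := antichainConst_nonneg hk
    have h := (tendsto_invCoeff_rpow hk hc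
      (one_le_invCoeff_antichainConst_self hk)).rpow_inv_comp_sub (invCoeff_nonneg hk hc) (2 * k)
    simp only [one_div]
    refine h.congr' ?_
    filter_upwards [eventually_gt_atTop (3 * k)] with n hn
    rw [coeff_antichainGF hk hn]
  · refine tendsto_atTop_mono' _ ?_ tendsto_antichainConst_rpow_inv
    filter_upwards [eventually_ge_atTop 2] with k hk
    exact rpow_inv_le_invCoeffGrowth hk (antichainConst_nonneg hk)
end
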